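/- arXiv:2303.02226 — 3 statements merged into one kernel-verified Lean document; each statement's English description precedes it below -/
import Mathlib

section
/- Let v and w be vectors in m-dimensional real Euclidean space with w ≠ 0, and suppose |⟨v, w⟩| > ⟨w, w⟩ / 2. Let c = nint(⟨v, w⟩ / ⟨w, w⟩) be the rounded projection coefficient. Then the Euclidean norm satisfies the strict inequality ‖v - c·w‖ < ‖v‖. -/
open scoped RealInnerProductSpace

/-! Expanding the square, `‖v - r • w‖² = ‖v‖² + ⟪w, w⟫ ((t - r)² - t²)` with
`t = ⟪v, w⟫ / ⟪w, w⟫`, so subtracting `r • w` shortens `v` as soon as `r` is closer to `t`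
than `0` is. The nearest integer to `t` is within `1/2` of it, and `|t| > 1/2` is exactly
the hypothesis on `|⟪v, w⟫|`. -/

section InnerProductSpace

variable {F : Type*} [NormedAddCommGroup F] [InnerProductSpace ℝ F]

theorem norm_sub_smul_sq_eq (v w : F) (r : ℝ) :
    ‖v - r • w‖ ^ 2 = ‖v‖ ^ 2 + ⟪w, w⟫ * ((⟪v, w⟫ / ⟪w, w⟫ - r) ^ 2 - (⟪v, w⟫ / ⟪w, w⟫) ^ 2) := by
  rw [norm_sub_sq_real, inner_smul_right, norm_smul, mul_pow, Real.norm_eq_abs, sq_abs,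
    ← real_inner_self_eq_norm_sq w]
  rcases eq_or_ne ⟪w, w⟫ 0 with hW | hW
  · simp [inner_self_eq_zero.mp hW]
  · field_simp
    ring

theorem norm_sub_smul_lt_norm {v w : F} {r : ℝ}
    (h : |⟪v, w⟫ / ⟪w, w⟫ - r| < |⟪v, w⟫ / ⟪w, w⟫|) : ‖v - r • w‖ < ‖v‖ := by
  have hW : 0 < ⟪w, w⟫ := by
    refine (real_inner_self_nonneg).lt_of_ne fun hW => ?_
    rw [← hW, div_zero, abs_zero] at h
    exact (abs_nonneg _).not_gt h
  have hsq : ‖v - r • w‖ ^ 2 < ‖v‖ ^ 2 := by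
    rw [norm_sub_smul_sq_eq]
    have := mul_neg_of_pos_of_neg hW (sub_neg.mpr (sq_lt_sq.mpr h))
    linarith
  exact lt_of_pow_lt_pow_left₀ 2 (norm_nonneg v) hsq

end InnerProductSpace

theorem abs_sub_round_lt_abs {t : ℝ} (ht : 1 / 2 < |t|) : |t - round t| < |t| :=
  (abs_sub_round t).trans_lt ht

theorem norm_sub_rounded_proj_lt_general {m : ℕ}
    (v w : EuclideanSpace ℝ (Fin m))
    (hvw : ⟪w, w⟫ / 2 < |⟪v, w⟫|)
    (c : ℤ) (hc : c = round (⟪v, w⟫ / ⟪w, w⟫)) :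
    ‖v - (c : ℝ) • w‖ < ‖v‖ := by
  have hW : 0 < ⟪w, w⟫ := by
    by_contra! hW
    have hw : w = 0 := inner_self_eq_zero.mp (hW.antisymm real_inner_self_nonneg)
    simp [hw] at hvw
  have ht : 1 / 2 < |⟪v, w⟫ / ⟪w, w⟫| := by
    rw [abs_div, abs_of_pos hW, lt_div_iff₀ hW]
    linarith
  subst hc
  exact norm_sub_smul_lt_norm (abs_sub_round_lt_abs ht)

/-- For `v w : ℝ^m` with `w ≠ 0` and `|⟪v, w⟫| > ⟪w, w⟫ / 2`, subtracting the
integer-rounded projection of `v` onto `w` strictly decreases the norm. -/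
theorem norm_sub_rounded_proj_lt {m : ℕ}
    (v w : EuclideanSpace ℝ (Fin m)) (hw : w ≠ 0)
    (hvw : ⟪w, w⟫ / 2 < |⟪v, w⟫|)
    (c : ℤ) (hc : c = round (⟪v, w⟫ / ⟪w, w⟫)) :
    ‖v - (c : ℝ) • w‖ < ‖v‖ :=
  norm_sub_rounded_proj_lt_general v w hvw c hc
end

section
/- Let a_1, …, a_n be vectors in m-dimensional real Euclidean space, let k be an index with a_k ≠ 0, and define the rounded projection coefficients c_j = nint(⟨a_j, a_k⟩ / ⟨a_k, a_k⟩) for j ≠ k and c_k = 0. Then for every real exponent p > 0, the sum of the p-th powers of the Euclidean norms does not increase: Σ_{j=1}^n ‖a_j - c_j·a_k‖^p ≤ Σ_{j=1}^n ‖a_j‖^p. -/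
/-!
The inequality holds term by term. Since
`‖x - r • y‖² = ‖x‖² - r (2⟪x, y⟫ - r⟪y, y⟫)`, subtracting `r • y` does not increase the
norm as soon as `r` is at least as close to `t = ⟪x, y⟫ / ⟪y, y⟫` as `0` is, and the nearest
integer to `t` is.
-/

open scoped RealInnerProductSpace

section InnerProductSpace

variable {E : Type*} [NormedAddCommGroup E] [InnerProductSpace ℝ E]

theorem norm_sub_smul_sq (x y : E) (r : ℝ) :
    ‖x - r • y‖ ^ 2 = ‖x‖ ^ 2 - r * (2 * ⟪x, y⟫ - r * ⟪y, y⟫) := by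
  rw [norm_sub_sq_real, real_inner_smul_right, norm_smul, mul_pow, Real.norm_eq_abs, sq_abs,
    ← real_inner_self_eq_norm_sq y]
  ring

theorem norm_sub_smul_le_norm_of_abs_sub_le (x y : E) {r : ℝ}
    (hr : |r - ⟪x, y⟫ / ⟪y, y⟫| ≤ |⟪x, y⟫ / ⟪y, y⟫|) : ‖x - r • y‖ ≤ ‖x‖ := by
  set t := ⟪x, y⟫ / ⟪y, y⟫
  have hxy : t * ⟪y, y⟫ = ⟪x, y⟫ :=
    div_mul_cancel_of_imp fun h ↦ by rw [inner_self_eq_zero.mp h, inner_zero_right]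
  have hrt : r * (r - 2 * t) ≤ 0 := by nlinarith [sq_le_sq.mpr hr]
  have hsq : ‖x - r • y‖ ^ 2 ≤ ‖x‖ ^ 2 := by
    rw [norm_sub_smul_sq, ← hxy]
    nlinarith [real_inner_self_nonneg (x := y)]
  exact (sq_le_sq₀ (norm_nonneg _) (norm_nonneg _)).mp hsq

theorem norm_sub_round_smul_le (x y : E) :
    ‖x - (round (⟪x, y⟫ / ⟪y, y⟫) : ℝ) • y‖ ≤ ‖x‖ :=
  norm_sub_smul_le_norm_of_abs_sub_le x y <| by
    simpa [abs_sub_comm] using round_le (⟪x, y⟫ / ⟪y, y⟫) 0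

end InnerProductSpace

theorem sum_rpow_norm_sub_rounded_proj_le_general {m n : ℕ}
    (a : Fin n → EuclideanSpace ℝ (Fin m)) (k : Fin n)
    (c : Fin n → ℤ)
    (hc : ∀ j, c j = if j = k then 0 else round (⟪a j, a k⟫ / ⟪a k, a k⟫))
    (p : ℝ) (hp : 0 < p) :
    ∑ j, ‖a j - (c j : ℝ) • a k‖ ^ p ≤ ∑ j, ‖a j‖ ^ p := by
  refine Finset.sum_le_sum fun j _ ↦ Real.rpow_le_rpow (norm_nonneg _) ?_ hp.le
  rw [hc j]
  split_ifs
  · simp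
  · exact norm_sub_round_smul_le (a j) (a k)

/-- Let `a 1, …, a n` be vectors in `ℝ^m`, let `k` be an index with `a k ≠ 0`,
and let `c j = nint (⟪a j, a k⟫ / ⟪a k, a k⟫)` for `j ≠ k` and `c k = 0`.
Then for every real exponent `p > 0`, the sum of the `p`-th powers of the
Euclidean norms does not increase. -/
theorem sum_rpow_norm_sub_rounded_proj_le {m n : ℕ}
    (a : Fin n → EuclideanSpace ℝ (Fin m)) (k : Fin n) (hk : a k ≠ 0)
    (c : Fin n → ℤ)
    (hc : ∀ j, c j = if j = k then 0 else round (⟪a j, a k⟫ / ⟪a k, a k⟫))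
    (p : ℝ) (hp : 0 < p) :
    ∑ j, ‖a j - (c j : ℝ) • a k‖ ^ p ≤ ∑ j, ‖a j‖ ^ p :=
  sum_rpow_norm_sub_rounded_proj_le_general a k c hc p hp
end

section
/- Let a_1, …, a_n be vectors in m-dimensional real Euclidean space, let k be an index with a_k ≠ 0, and define the rounded projection coefficients c_j = nint(⟨a_j, a_k⟩ / ⟨a_k, a_k⟩) for j ≠ k and c_k = 0. Then the maximum of the squared Euclidean norms does not increase: max_{1 ≤ j ≤ n} ‖a_j - c_j·a_k‖^2 ≤ max_{1 ≤ j ≤ n} ‖a_j‖^2. -/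
/-!
Write `t = ⟪x, y⟫ / ⟪y, y⟫` and `r = round t`. Then
`‖x - r • y‖² = ‖x‖² - (2 r t - r²) ⟪y, y⟫`, and `r² ≤ 2 r t` is `|r - t| ≤ |t|`:
either `|t| < 1/2` and `r = 0`, or `|r - t| ≤ 1/2 ≤ |t|`.
-/

open scoped RealInnerProductSpace

theorem sq_round_le_two_mul_round_mul (t : ℝ) : (round t : ℝ) ^ 2 ≤ 2 * round t * t := by
  have h : |(round t : ℝ) - t| ≤ |t| := by
    rcases lt_or_ge |t| (1 / 2) with ht | ht
    · rw [round_eq_zero_iff.mpr ⟨by linarith [neg_abs_le t], by linarith [le_abs_self t]⟩]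
      simp
    · rw [abs_sub_comm]
      exact (abs_sub_round t).trans ht
  nlinarith [sq_le_sq.mpr h]

theorem norm_sub_round_inner_div_smul_le {E : Type*} [NormedAddCommGroup E]
    [InnerProductSpace ℝ E] (x y : E) :
    ‖x - (round (⟪x, y⟫ / ⟪y, y⟫) : ℝ) • y‖ ≤ ‖x‖ := by
  rcases eq_or_ne y 0 with rfl | hy
  · simp
  set t := ⟪x, y⟫ / ⟪y, y⟫
  have hyy : 0 < ⟪y, y⟫ := real_inner_self_pos.mpr hy
  have hxy : ⟪x, y⟫ = t * ⟪y, y⟫ := (div_mul_cancel₀ _ hyy.ne').symm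
  have hexp : ‖x - (round t : ℝ) • y‖ ^ 2 =
      ‖x‖ ^ 2 - (2 * round t * t - (round t : ℝ) ^ 2) * ⟪y, y⟫ := by
    rw [norm_sub_sq_real, real_inner_smul_right, norm_smul, mul_pow, Real.norm_eq_abs, sq_abs,
      ← real_inner_self_eq_norm_sq y, hxy]
    ring
  refine (sq_le_sq₀ (norm_nonneg _) (norm_nonneg _)).mp ?_
  rw [hexp]
  nlinarith [sq_round_le_two_mul_round_mul t]

theorem max_sq_norm_sub_rounded_proj_le_general {m n : ℕ}
    (a : Fin n → EuclideanSpace ℝ (Fin m)) (k : Fin n)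
    (c : Fin n → ℤ)
    (hc : ∀ j, c j = if j = k then 0 else round (⟪a j, a k⟫ / ⟪a k, a k⟫)) :
    Finset.univ.sup' ⟨k, Finset.mem_univ k⟩
        (fun j => ‖a j - (c j : ℝ) • a k‖ ^ 2) ≤
      Finset.univ.sup' ⟨k, Finset.mem_univ k⟩ (fun j => ‖a j‖ ^ 2) := by
  refine Finset.sup'_le _ _ fun j _ =>
    le_trans ?_ (Finset.le_sup' (fun i => ‖a i‖ ^ 2) (Finset.mem_univ j))
  gcongr
  rw [hc j]
  split_ifs
  · simp
  · exact_mod_cast norm_sub_round_inner_div_smul_le (a j) (a k)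

/-- Let `a 1, …, a n` be vectors in `ℝ^m`, let `k` be an index with `a k ≠ 0`,
and let `c j = nint (⟪a j, a k⟫ / ⟪a k, a k⟫)` for `j ≠ k` and `c k = 0`.
Then the maximum of the squared Euclidean norms does not increase. -/
theorem max_sq_norm_sub_rounded_proj_le {m n : ℕ}
    (a : Fin n → EuclideanSpace ℝ (Fin m)) (k : Fin n) (hk : a k ≠ 0)
    (c : Fin n → ℤ)
    (hc : ∀ j, c j = if j = k then 0 else round (⟪a j, a k⟫ / ⟪a k, a k⟫)) :
    Finset.univ.sup' ⟨k, Finset.mem_univ k⟩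
        (fun j => ‖a j - (c j : ℝ) • a k‖ ^ 2) ≤
      Finset.univ.sup' ⟨k, Finset.mem_univ k⟩ (fun j => ‖a j‖ ^ 2) :=
  max_sq_norm_sub_rounded_proj_le_general a k c hc
end
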